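/- Let x ∈ ∂ℝ₊^d and let H_x = {y ∈ ℝ^d : y_j = 0 for all j ∈ 𝓘(x)} where 𝓘(x) = {j : x_j = 0} ≠ ∅, and let span[R(x)] be the span of {R_j : j ∈ 𝓘(x)} where R = I − Qᵀ for a nonnegative matrix Q with zero diagonal and spectral radius < 1. Then H_x ∩ span[R(x)] = {0}, and consequently every y ∈ ℝ^d admits a unique decomposition y = v + w with v ∈ H_x and w ∈ span[R(x)]; moreover the map 𝓛_x : ℝ^d → H_x sending y to v is linear. -/

import Mathlib

/-! If `y` lies in both subspaces, then `y = (1 - Qᵀ) c` with `c` supported on `𝓘(x)`, and the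
vanishing of `y` on `𝓘(x)` gives `|c| ≤ Qᵀ |c|` entrywise. A Perron–Frobenius argument
(Collatz–Wielandt maximisation for positive matrices, then a perturbation limit) turns a nonzero
such `|c|` into a *real* eigenvalue `r ≥ 1` of `Q`; this matters because `spectralRadius ℝ Q` only
sees real eigenvalues. Hence the principal submatrix of `1 - Qᵀ` on `𝓘(x)` is injective, so also
surjective, and solving with it splits any `y` into its two components. -/

open Matrix Filter Topology

section CollatzWielandt

variable {ι : Type*} [Fintype ι] {A : Matrix ι ι ℝ}

lemma le_sum_of_smul_le_mulVec (hA : ∀ i j, 0 ≤ A i j) {r : ℝ} {v : ι → ℝ}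
    (hv : v ∈ stdSimplex ℝ ι) (h : r • v ≤ A *ᵥ v) : r ≤ ∑ i, ∑ j, A i j := by
  have hv1 : ∀ j, v j ≤ 1 := fun j =>
    hv.2 ▸ Finset.single_le_sum (fun k _ => hv.1 k) (Finset.mem_univ j)
  calc r = ∑ i, r * v i := by rw [← Finset.mul_sum, hv.2, mul_one]
    _ ≤ ∑ i, ∑ j, A i j * v j := Finset.sum_le_sum fun i _ => h i
    _ ≤ ∑ i, ∑ j, A i j := by
      gcongr with i _ j _
      exact mul_le_of_le_one_right (hA i j) (hv1 j)

lemma exists_mem_stdSimplex_smul_le_mulVec {r : ℝ} {v : ι → ℝ} (hv : 0 ≤ v) (hv0 : v ≠ 0)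
    (h : r • v ≤ A *ᵥ v) : ∃ w ∈ stdSimplex ℝ ι, r • w ≤ A *ᵥ w := by
  have hsum : 0 < ∑ i, v i := by
    obtain ⟨i, hi⟩ := Function.ne_iff.mp hv0
    exact Finset.sum_pos' (fun j _ => hv j) ⟨i, Finset.mem_univ _, (hv i).lt_of_ne' hi⟩
  refine ⟨(∑ i, v i)⁻¹ • v, ⟨fun i => mul_nonneg (inv_nonneg.2 hsum.le) (hv i), ?_⟩, ?_⟩
  · simp only [Pi.smul_apply, smul_eq_mul, ← Finset.mul_sum, inv_mul_cancel₀ hsum.ne']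
  · rw [mulVec_smul, smul_comm]
    exact smul_le_smul_of_nonneg_left h (inv_nonneg.2 hsum.le)

lemma mulVec_pos (hA : ∀ i j, 0 < A i j) {v : ι → ℝ} (hv : 0 ≤ v) (hv0 : v ≠ 0) (i : ι) :
    0 < (A *ᵥ v) i := by
  obtain ⟨j, hj⟩ := Function.ne_iff.mp hv0
  exact Finset.sum_pos' (fun k _ => mul_nonneg (hA i k).le (hv k))
    ⟨j, Finset.mem_univ _, mul_pos (hA i j) ((hv j).lt_of_ne' hj)⟩

lemma exists_lt_smul_le_mulVec (hA : ∀ i j, 0 < A i j) {r : ℝ} {v : ι → ℝ}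
    (hv : v ∈ stdSimplex ℝ ι) (h : r • v ≤ A *ᵥ v) (hne : A *ᵥ v ≠ r • v) :
    ∃ r' > r, ∃ w, 0 ≤ w ∧ w ≠ 0 ∧ r' • w ≤ A *ᵥ w := by
  have hv0 : v ≠ 0 := fun h0 => by simpa [h0] using hv.2
  obtain ⟨i₀, -⟩ := Function.ne_iff.mp hv0
  set w := A *ᵥ v
  set z := w - r • v
  have hz : 0 ≤ z := sub_nonneg.2 h
  have hz0 : z ≠ 0 := sub_ne_zero.2 hne
  have hw : ∀ i, 0 < w i := mulVec_pos hA hv.1 hv0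
  have hAw : A *ᵥ w = r • w + A *ᵥ z := by
    simp only [z, mulVec_sub, mulVec_smul]; abel
  have hε : ∀ᶠ ε in 𝓝[>] (0 : ℝ), ∀ i, ε * w i < (A *ᵥ z) i := by
    refine Filter.eventually_all.2 fun i => nhdsWithin_le_nhds ?_
    exact ((continuous_mul_const (w i)).tendsto' 0 0 (zero_mul _)).eventually
      (gt_mem_nhds (mulVec_pos hA hz hz0 i))
  obtain ⟨ε, hεw, hεpos⟩ := (hε.and self_mem_nhdsWithin).exists
  refine ⟨r + ε, lt_add_of_pos_right r hεpos, w, fun i => (hw i).le,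
    Function.ne_iff.2 ⟨i₀, (hw i₀).ne'⟩, fun i => ?_⟩
  rw [hAw]
  simp only [Pi.smul_apply, Pi.add_apply, smul_eq_mul, add_mul]
  linarith [hεw i]

lemma exists_mulVec_eq_smul_of_pos (hA : ∀ i j, 0 < A i j) {u : ι → ℝ} (hu : 0 ≤ u)
    (hu0 : u ≠ 0) (h : u ≤ A *ᵥ u) :
    ∃ r ∈ Set.Icc 1 (∑ i, ∑ j, A i j), ∃ v ∈ stdSimplex ℝ ι, A *ᵥ v = r • v := by
  have hA' : ∀ i j, 0 ≤ A i j := fun i j => (hA i j).le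
  set K := (Set.Icc 1 (∑ i, ∑ j, A i j) ×ˢ stdSimplex ℝ ι) ∩ {p | p.1 • p.2 ≤ A *ᵥ p.2}
  have hK : IsCompact K := (isCompact_Icc.prod (isCompact_stdSimplex ℝ ι)).inter_right
    (isClosed_le (by fun_prop) (continuous_const.matrix_mulVec continuous_snd))
  have hmem : ∀ r w, 1 ≤ r → 0 ≤ w → w ≠ 0 → r • w ≤ A *ᵥ w → ∃ v, (r, v) ∈ K := by
    intro r w hr hw hw0 hrw
    obtain ⟨v, hv, hrv⟩ := exists_mem_stdSimplex_smul_le_mulVec hw hw0 hrw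
    exact ⟨v, ⟨⟨hr, le_sum_of_smul_le_mulVec hA' hv hrv⟩, hv⟩, hrv⟩
  obtain ⟨u', hu'⟩ := hmem 1 u le_rfl hu hu0 (by rwa [one_smul])
  obtain ⟨⟨r, v⟩, ⟨⟨hr, hv⟩, hrv⟩, hmax⟩ :=
    hK.exists_isMaxOn ⟨_, hu'⟩ continuous_fst.continuousOn
  refine ⟨r, hr, v, hv, by_contra fun hne => ?_⟩
  obtain ⟨r', hr', w, hw, hw0, hrw⟩ := exists_lt_smul_le_mulVec hA hv hrv hne
  obtain ⟨v', hv'⟩ := hmem r' w (hr.1.trans hr'.le) hw hw0 hrw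
  exact (hmax hv').not_gt hr'

lemma mulVec_le_mulVec_of_le {B : Matrix ι ι ℝ} (hAB : ∀ i j, A i j ≤ B i j) {v : ι → ℝ}
    (hv : 0 ≤ v) : A *ᵥ v ≤ B *ᵥ v :=
  fun i => Finset.sum_le_sum fun j _ => mul_le_mul_of_nonneg_right (hAB i j) (hv j)

lemma exists_mulVec_eq_smul_of_nonneg (hA : ∀ i j, 0 ≤ A i j) {u : ι → ℝ} (hu : 0 ≤ u)
    (hu0 : u ≠ 0) (h : u ≤ A *ᵥ u) :
    ∃ r : ℝ, 1 ≤ r ∧ ∃ v ∈ stdSimplex ℝ ι, A *ᵥ v = r • v := by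
  set B : ℕ → Matrix ι ι ℝ := fun n => A + ((n : ℝ) + 1)⁻¹ • Matrix.of fun _ _ => 1
  have hB : ∀ n i j, B n i j = A i j + ((n : ℝ) + 1)⁻¹ := fun n i j => by simp [B]
  have hAB : ∀ n i j, A i j < B n i j := fun n i j => by
    rw [hB]; exact lt_add_of_pos_right _ (by positivity)
  have hB1 : ∀ n i j, B n i j ≤ A i j + 1 := fun n i j => by
    rw [hB]; gcongr; exact inv_le_one_of_one_le₀ (le_add_of_nonneg_left n.cast_nonneg)
  choose r hr v hv hrv using fun n => exists_mulVec_eq_smul_of_pos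
    (fun i j => (hA i j).trans_lt (hAB n i j)) hu hu0
    (h.trans (mulVec_le_mulVec_of_le (fun i j => (hAB n i j).le) hu))
  have hbound : ∀ n, (r n, v n) ∈ Set.Icc 1 (∑ i, ∑ j, (A i j + 1)) ×ˢ stdSimplex ℝ ι :=
    fun n => ⟨⟨(hr n).1, (hr n).2.trans (by gcongr with i _ j _; exact hB1 n i j)⟩, hv n⟩
  obtain ⟨⟨r₀, v₀⟩, ⟨hr₀, hv₀⟩, φ, hφ, hlim⟩ :=
    (isCompact_Icc.prod (isCompact_stdSimplex ℝ ι)).tendsto_subseq hbound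
  have hBA : Tendsto (fun n => B (φ n)) atTop (𝓝 A) := by
    have := ((tendsto_one_div_add_atTop_nhds_zero_nat (𝕜 := ℝ)).comp
      hφ.tendsto_atTop).smul_const (Matrix.of fun (_ _ : ι) => (1 : ℝ))
    simpa [B] using tendsto_const_nhds.add this
  have hBv : Tendsto (fun n => B (φ n) *ᵥ v (φ n)) atTop (𝓝 (A *ᵥ v₀)) :=
    ((continuous_fst.matrix_mulVec continuous_snd).tendsto _).comp
      (hBA.prodMk_nhds ((continuous_snd.tendsto _).comp hlim))
  have hrv₀ : Tendsto (fun n => r (φ n) • v (φ n)) atTop (𝓝 (r₀ • v₀)) :=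
    (continuous_smul.tendsto _).comp hlim
  exact ⟨r₀, hr₀.1, v₀, hv₀, tendsto_nhds_unique hBv (hrv₀.congr fun n => (hrv (φ n)).symm)⟩

end CollatzWielandt

lemma mem_spectrum_of_vecMul_eq_smul {ι K : Type*} [Fintype ι] [DecidableEq ι] [Field K]
    {A : Matrix ι ι K} {r : K} {v : ι → K} (hv : v ≠ 0) (h : v ᵥ* A = r • v) :
    r ∈ spectrum K A := by
  rw [spectrum.mem_iff, Algebra.algebraMap_eq_smul_one, isUnit_iff_isUnit_det, isUnit_iff_ne_zero,
    not_not, ← exists_vecMul_eq_zero_iff]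
  exact ⟨v, hv, by rw [vecMul_sub, vecMul_smul, vecMul_one, h, sub_self]⟩

lemma mem_span_image_cols_iff {m n K : Type*} [Fintype n] [CommSemiring K] {M : Matrix m n K}
    {s : Set n} {y : m → K} :
    y ∈ Submodule.span K ((fun j i => M i j) '' s) ↔ ∃ c, (∀ j ∉ s, c j = 0) ∧ M *ᵥ c = y := by
  classical
  rw [Finsupp.mem_span_image_iff_linearCombination]
  constructor
  · rintro ⟨l, hl, rfl⟩
    refine ⟨l, fun j hj => Finsupp.notMem_support_iff.1 fun h => hj (hl h), ?_⟩
    ext i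
    simp [Finsupp.linearCombination_apply, Finsupp.sum_fintype, mulVec, dotProduct, mul_comm]
  · rintro ⟨c, hc, rfl⟩
    refine ⟨Finsupp.equivFunOnFinite.symm c, (Finsupp.mem_supported K _).2 fun j hj =>
      by_contra fun hjs => Finsupp.mem_support_iff.1 hj (by simpa using hc j hjs), ?_⟩
    ext i
    simp [Finsupp.linearCombination_apply, Finsupp.sum_fintype, mulVec, dotProduct, mul_comm]

lemma isCompl_pi_bot_span_image_cols {ι K : Type*} [Fintype ι] [Field K]
    {M : Matrix ι ι K} {s : Set ι}
    (hM : ∀ c, (∀ j ∉ s, c j = 0) → (∀ i ∈ s, (M *ᵥ c) i = 0) → c = 0) :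
    IsCompl (Submodule.pi s fun _ => ⊥) (Submodule.span K ((fun j i => M i j) '' s)) := by
  classical
  set F : (ι → K) →ₗ[K] ι → K := LinearMap.pi fun i =>
    if i ∈ s then LinearMap.proj i ∘ₗ M.mulVecLin else LinearMap.proj i
  -- `F` is `M` with its rows outside `s` replaced by those of the identity.
  have hF : ∀ c i, F c i = if i ∈ s then (M *ᵥ c) i else c i := fun c i => by
    simp only [F, LinearMap.pi_apply]; split_ifs <;> rfl
  have hFsurj : Function.Surjective F := by
    refine LinearMap.injective_iff_surjective.1 ((injective_iff_map_eq_zero F).2 fun c hc => ?_)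
    refine hM c (fun j hj => ?_) (fun i hi => ?_)
    · simpa [hF, hj] using congrFun hc j
    · simpa [hF, hi] using congrFun hc i
  refine ⟨Submodule.disjoint_def.2 fun y hyH hyS => ?_,
    codisjoint_iff.2 (eq_top_iff.2 fun y _ => ?_)⟩
  · obtain ⟨c, hc, rfl⟩ := mem_span_image_cols_iff.1 hyS
    rw [hM c hc fun i hi => (Submodule.mem_bot K).1 (Submodule.mem_pi.1 hyH i hi), mulVec_zero]
  · obtain ⟨c, hc⟩ := hFsurj (s.piecewise y 0)
    have hcs : ∀ j ∉ s, c j = 0 := fun j hj => by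
      simpa [hF, hj] using congrFun hc j
    refine Submodule.mem_sup.2 ⟨y - M *ᵥ c,
      Submodule.mem_pi.2 fun i hi => (Submodule.mem_bot K).2 ?_, M *ᵥ c,
      mem_span_image_cols_iff.2 ⟨c, hcs, rfl⟩, sub_add_cancel _ _⟩
    simpa [hF, hi, sub_eq_zero] using (congrFun hc i).symm

lemma existsUnique_add_mem_of_isCompl {K E : Type*} [Ring K] [AddCommGroup E] [Module K E]
    {p q : Submodule K E} (h : IsCompl p q) (y : E) :
    ∃! vw : E × E, vw.1 ∈ p ∧ vw.2 ∈ q ∧ y = vw.1 + vw.2 := by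
  refine ⟨(p.projection q h y, q.projection p h.symm y),
    ⟨Submodule.projection_apply_mem h y, Submodule.projection_apply_mem h.symm y,
      (Submodule.projection_add_projection_eq_self h y).symm⟩, ?_⟩
  rintro ⟨v, w⟩ ⟨hv, hw, rfl⟩
  simp [Submodule.projection_apply_of_mem_left, Submodule.projection_apply_of_mem_right, hv, hw]

lemma one_le_spectralRadius_of_le_vecMul {ι : Type*} [Fintype ι] [DecidableEq ι]
    {A : Matrix ι ι ℝ} (hA : ∀ i j, 0 ≤ A i j) {u : ι → ℝ} (hu : 0 ≤ u) (hu0 : u ≠ 0)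
    (h : u ≤ u ᵥ* A) : 1 ≤ spectralRadius ℝ A := by
  obtain ⟨r, hr, v, hv, hrv⟩ := exists_mulVec_eq_smul_of_nonneg (A := Aᵀ) (fun i j => hA j i)
    hu hu0 (by rwa [mulVec_transpose])
  rw [mulVec_transpose] at hrv
  have hv0 : v ≠ 0 := fun h0 => by simpa [h0] using hv.2
  calc (1 : ENNReal) ≤ ‖r‖₊ := by
        rw [ENNReal.one_le_coe_iff, ← NNReal.coe_le_coe, coe_nnnorm, Real.norm_eq_abs]
        exact hr.trans (le_abs_self r)
    _ ≤ spectralRadius ℝ A :=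
        le_iSup₂ (f := fun k (_ : k ∈ spectrum ℝ A) => (‖k‖₊ : ENNReal)) r
          (mem_spectrum_of_vecMul_eq_smul hv0 hrv)

lemma eq_zero_of_one_sub_transpose_mulVec_eq_zero_on {ι : Type*} [Fintype ι] [DecidableEq ι]
    {Q : Matrix ι ι ℝ} (hQ : ∀ i j, 0 ≤ Q i j) (hspec : spectralRadius ℝ Q < 1) {s : Set ι}
    {c : ι → ℝ} (hc : ∀ j ∉ s, c j = 0) (hRc : ∀ i ∈ s, ((1 - Qᵀ) *ᵥ c) i = 0) : c = 0 := by
  have hle : (fun i => |c i|) ≤ (fun i => |c i|) ᵥ* Q := fun i => by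
    have hQc : 0 ≤ ((fun i => |c i|) ᵥ* Q) i :=
      Finset.sum_nonneg fun j _ => mul_nonneg (abs_nonneg _) (hQ j i)
    by_cases hi : i ∈ s
    · have hci : c i = (c ᵥ* Q) i := by
        simpa [sub_mulVec, mulVec_transpose, sub_eq_zero] using hRc i hi
      calc |c i| = |∑ j, c j * Q j i| := by rw [hci]; rfl
        _ ≤ ∑ j, |c j * Q j i| := Finset.abs_sum_le_sum_abs _ _
        _ = ((fun i => |c i|) ᵥ* Q) i := Finset.sum_congr rfl fun j _ => by
            rw [abs_mul, abs_of_nonneg (hQ j i)]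
    · simpa only [hc i hi, abs_zero] using hQc
  by_contra hc0
  have hu0 : (fun i => |c i|) ≠ 0 := fun h0 =>
    hc0 (funext fun i => abs_eq_zero.1 (congrFun h0 i))
  exact (one_le_spectralRadius_of_le_vecMul hQ (fun i => abs_nonneg _) hu0 hle).not_gt hspec

theorem boundary_decomposition_general (d : ℕ) (Q : Matrix (Fin d) (Fin d) ℝ)
    (hQnonneg : ∀ i j, 0 ≤ Q i j)
    (hspec : spectralRadius ℝ Q < 1)
    (x : Fin d → ℝ) :
    let R : Matrix (Fin d) (Fin d) ℝ := 1 - Q.transpose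
    let spanRx : Submodule ℝ (Fin d → ℝ) :=
      Submodule.span ℝ ((fun j => fun i => R i j) '' {j | x j = 0})
    (∀ y : Fin d → ℝ, (∀ j, x j = 0 → y j = 0) → y ∈ spanRx → y = 0)
    ∧ (∀ y : Fin d → ℝ, ∃! vw : (Fin d → ℝ) × (Fin d → ℝ),
        (∀ j, x j = 0 → vw.1 j = 0) ∧ vw.2 ∈ spanRx ∧ y = vw.1 + vw.2)
    ∧ (∃ L : (Fin d → ℝ) →ₗ[ℝ] (Fin d → ℝ), ∀ y : Fin d → ℝ,
        (∀ j, x j = 0 → L y j = 0) ∧ y - L y ∈ spanRx) := by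
  intro R spanRx
  set H : Submodule ℝ (Fin d → ℝ) := Submodule.pi {j | x j = 0} fun _ => ⊥
  have hH : ∀ y, y ∈ H ↔ ∀ j, x j = 0 → y j = 0 := fun y => by
    simp [H, Submodule.mem_pi]
  have hcompl : IsCompl H spanRx := isCompl_pi_bot_span_image_cols fun c hc hRc =>
    eq_zero_of_one_sub_transpose_mulVec_eq_zero_on hQnonneg hspec hc hRc
  refine ⟨fun y hy hyS => Submodule.disjoint_def.1 hcompl.disjoint y ((hH y).2 hy) hyS,
    fun y => ?_,
    ⟨H.projection spanRx hcompl, fun y => ⟨(hH _).1 (H.projection_apply_mem _ y), ?_⟩⟩⟩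
  · simpa only [hH] using existsUnique_add_mem_of_isCompl hcompl y
  · rw [← eq_sub_of_add_eq' (Submodule.projection_add_projection_eq_self hcompl y)]
    exact Submodule.projection_apply_mem _ y

/-- For a boundary point `x ∈ ∂ℝ₊^d` and `R = I − Qᵀ` with `Q` nonnegative, zero diagonal
and spectral radius `< 1`: the subspace `H_x = {y : y_j = 0 for j ∈ 𝓘(x)}` meets
`span{R_j : j ∈ 𝓘(x)}` only in `0`; every `y` decomposes uniquely as `y = v + w` with
`v ∈ H_x`, `w ∈ span R(x)`; and the projection `y ↦ v` is realized by a linear map. -/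
theorem boundary_decomposition (d : ℕ) (Q : Matrix (Fin d) (Fin d) ℝ)
    (hQnonneg : ∀ i j, 0 ≤ Q i j) (hQdiag : ∀ i, Q i i = 0)
    (hspec : spectralRadius ℝ Q < 1)
    (x : Fin d → ℝ) (hx : ∀ i, 0 ≤ x i) (hbdry : ∃ j, x j = 0) :
    let R : Matrix (Fin d) (Fin d) ℝ := 1 - Q.transpose
    let spanRx : Submodule ℝ (Fin d → ℝ) :=
      Submodule.span ℝ ((fun j => fun i => R i j) '' {j | x j = 0})
    (∀ y : Fin d → ℝ, (∀ j, x j = 0 → y j = 0) → y ∈ spanRx → y = 0)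
    ∧ (∀ y : Fin d → ℝ, ∃! vw : (Fin d → ℝ) × (Fin d → ℝ),
        (∀ j, x j = 0 → vw.1 j = 0) ∧ vw.2 ∈ spanRx ∧ y = vw.1 + vw.2)
    ∧ (∃ L : (Fin d → ℝ) →ₗ[ℝ] (Fin d → ℝ), ∀ y : Fin d → ℝ,
        (∀ j, x j = 0 → L y j = 0) ∧ y - L y ∈ spanRx) :=
  boundary_decomposition_general d Q hQnonneg hspec x
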